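/- arXiv:2501.12316 — 4 statements merged into one kernel-verified Lean document; each statement's English description precedes it below -/
import Mathlib

section
/- Let a₁, a₂, …, a_n be a finite multiset of positive integers (endpoint times). Then the prefix condition 'for every t, the number of indices i with a_i ≤ t is at most t' holds if and only if there exists an injective function f : {1,…,n} → ℕ₊ with f(i) ≤ a_i for all i (i.e., the endpoints can be shifted left to pairwise distinct positive times). -/
/-- A finite multiset of positive integer endpoint times `a 0, …, a (n-1)` satisfies
the prefix condition (for every `t`, at most `t` of the `a i` are `≤ t`) if and only
if the endpoints can be shifted left to pairwise distinct positive times, i.e. there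
is an injective `f` with `1 ≤ f i ≤ a i` for all `i`. -/
theorem prefix_condition_iff_injective_shift (n : ℕ) (a : Fin n → ℕ)
    (ha : ∀ i, 0 < a i) :
    (∀ t : ℕ, (Finset.univ.filter fun i => a i ≤ t).card ≤ t) ↔
      ∃ f : Fin n → ℕ, Function.Injective f ∧ ∀ i, 0 < f i ∧ f i ≤ a i := by
  constructor
  · intro h
    have := (Finset.all_card_le_biUnion_card_iff_exists_injective
      (fun i : Fin n => Finset.Icc 1 (a i))).1 ?_
    · obtain ⟨f, hf, hmem⟩ := this
      exact ⟨f, hf, fun i => ⟨(Finset.mem_Icc.1 (hmem i)).1, (Finset.mem_Icc.1 (hmem i)).2⟩⟩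
    · intro s
      rcases s.eq_empty_or_nonempty with rfl | hs
      · simp
      · obtain ⟨m, hm, hmax⟩ := s.exists_max_image a hs
        calc s.card ≤ (Finset.univ.filter fun i => a i ≤ a m).card := by
              apply Finset.card_le_card; intro i hi
              simp only [Finset.mem_filter, Finset.mem_univ, true_and]
              exact hmax i hi
          _ ≤ a m := h (a m)
          _ = (Finset.Icc 1 (a m)).card := by simp [Nat.card_Icc]
          _ ≤ _ := Finset.card_le_card (by
              intro x hx
              simp only [Finset.mem_Icc] at hx
              exact Finset.mem_biUnion.2 ⟨m, hm, Finset.mem_Icc.2 ⟨hx.1, hx.2⟩⟩)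
  · rintro ⟨f, hf, hfi⟩ t
    have hsub : (Finset.univ.filter fun i => a i ≤ t).image f ⊆ Finset.Icc 1 t := by
      intro x hx
      simp only [Finset.mem_image, Finset.mem_filter] at hx
      obtain ⟨i, ⟨_, hi⟩, rfl⟩ := hx
      exact Finset.mem_Icc.2 ⟨(hfi i).1, (hfi i).2.trans hi⟩
    calc (Finset.univ.filter fun i => a i ≤ t).card
        = ((Finset.univ.filter fun i => a i ≤ t).image f).card :=
          (Finset.card_image_of_injective _ hf).symm
      _ ≤ (Finset.Icc 1 t).card := Finset.card_le_card hsub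
      _ ≤ t := by simp [Nat.card_Icc]
end

section
/- For a fan graph G consisting of a path on n vertices each additionally joined to a central vertex v, the broadcast time from v satisfies Br(G, v) ≤ 1.5√n + 2, while the broadcast time of the path obtained by deleting v from the source at one of its endpoints equals n − 1. Hence Br(G ∖ {v}, s) = Ω(Br(G, v)²). -/
/-- Classic telephone broadcasting schedule (one call per informed vertex per round). -/
def IsSchedule {V : Type*} (G : SimpleGraph V) (S : ℕ → Set V) : Prop :=
  ∀ t : ℕ, S t ⊆ S (t + 1) ∧
    ∃ f : V → V,
      (∀ w ∈ S (t + 1) \ S t, f w ∈ S t ∧ G.Adj (f w) w) ∧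
      ∀ u : V, Set.ncard {w | w ∈ S (t + 1) \ S t ∧ f w = u} ≤ 1

/-- The telephone broadcast time `Br(G, s)`. -/
noncomputable def broadcastTime {V : Type*} (G : SimpleGraph V) (s : V) : ℕ :=
  sInf {R | ∃ S : ℕ → Set V, S 0 = {s} ∧ IsSchedule G S ∧ S R = Set.univ}

/-- The fan graph: a path on `n` vertices `some 0, …, some (n-1)` each additionally
joined to the central vertex `none`. -/
def fanGraph (n : ℕ) : SimpleGraph (Option (Fin n)) :=
  SimpleGraph.fromRel (fun x y =>
    (∃ i j : Fin n, x = some i ∧ y = some j ∧ (i : ℕ) + 1 = (j : ℕ)) ∨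
      (x = none ∧ ∃ i : Fin n, y = some i))

/-! From the centre, broadcast on the fan in `R` rounds with `n ≤ R (R + 1) / 2`: cut the path
into consecutive blocks of lengths `R, R - 1, …, 1`; in round `k + 1` the centre calls the first
vertex of block `k`, which then passes the message along its block, finishing by round `R`.
So `R ≈ √(2n)`. On the path itself, a message moves at most one step per round, so from an
endpoint it needs `n - 1` rounds. -/

open Finset

section Broadcast

variable {V : Type*} (G : SimpleGraph V)

def CanBroadcastWithin (s : V) (R : ℕ) : Prop :=
  ∃ S : ℕ → Set V, S 0 = {s} ∧ IsSchedule G S ∧ S R = Set.univ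

theorem isSchedule_of_parent (τ : V → ℕ) (par : V → V)
    (hpar : ∀ v, τ v ≠ 0 → G.Adj (par v) v ∧ τ (par v) < τ v)
    (hinj : ∀ v w, τ v ≠ 0 → τ v = τ w → par v = par w → v = w) :
    IsSchedule G fun t => {v | τ v ≤ t} := by
  intro t
  refine ⟨fun v (hv : τ v ≤ t) => show τ v ≤ t + 1 by omega, par, ?_, fun u => ?_⟩
  · rintro w ⟨hw, hw'⟩
    simp only [Set.mem_ofPred_eq, not_le] at hw hw'
    obtain ⟨hadj, hlt⟩ := hpar w (by omega)
    exact ⟨show τ (par w) ≤ t by omega, hadj⟩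
  · have hsub : {w | w ∈ {v | τ v ≤ t + 1} \ {v | τ v ≤ t} ∧ par w = u}.Subsingleton := by
      rintro v ⟨⟨hv, hv'⟩, rfl⟩ w ⟨⟨hw, hw'⟩, hvw⟩
      simp only [Set.mem_ofPred_eq, not_le] at hv hv' hw hw'
      exact hinj v w (by omega) (by omega) hvw.symm
    have := hsub.finite.to_subtype
    exact Set.ncard_le_one_iff_subsingleton.2 hsub

theorem canBroadcastWithin_of_parent {s : V} (τ : V → ℕ) (par : V → V)
    (hτ : ∀ v, τ v = 0 ↔ v = s)
    (hpar : ∀ v, τ v ≠ 0 → G.Adj (par v) v ∧ τ (par v) < τ v)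
    (hinj : ∀ v w, τ v ≠ 0 → τ v = τ w → par v = par w → v = w)
    {R : ℕ} (hR : ∀ v, τ v ≤ R) :
    CanBroadcastWithin G s R := by
  refine ⟨fun t => {v | τ v ≤ t}, ?_, isSchedule_of_parent G τ par hpar hinj, ?_⟩
  · ext v
    simp [hτ]
  · ext v
    simp [hR v]

theorem broadcastTime_le {s : V} {R : ℕ} (h : CanBroadcastWithin G s R) :
    broadcastTime G s ≤ R :=
  Nat.sInf_le h

theorem le_of_mem_schedule (φ : V → ℕ) (hφ : ∀ u v, G.Adj u v → φ v ≤ φ u + 1)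
    {S : ℕ → Set V} (hS : IsSchedule G S) {s : V} (hS0 : S 0 = {s}) :
    ∀ t, ∀ v ∈ S t, φ v ≤ φ s + t := by
  intro t
  induction t with
  | zero =>
    intro v hv
    rw [hS0, Set.mem_singleton_iff] at hv
    simp [hv]
  | succ t ih =>
    intro v hv
    by_cases hvt : v ∈ S t
    · exact (ih v hvt).trans (by omega)
    · obtain ⟨-, f, hf, -⟩ := hS t
      obtain ⟨hfv, hadj⟩ := hf v ⟨hv, hvt⟩
      have := ih (f v) hfv
      have := hφ _ _ hadj
      omega

theorem le_broadcastTime {s : V} (hne : ∃ R, CanBroadcastWithin G s R)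
    (φ : V → ℕ) (hφ : ∀ u v, G.Adj u v → φ v ≤ φ u + 1) (hs : φ s = 0) (v : V) :
    φ v ≤ broadcastTime G s := by
  refine le_csInf hne fun R ⟨S, hS0, hS, hSR⟩ => ?_
  simpa [hs] using le_of_mem_schedule G φ hφ hS hS0 R v (hSR ▸ Set.mem_univ v)

end Broadcast

section Path

theorem canBroadcastWithin_pathGraph {n : ℕ} (hn : 1 ≤ n) :
    CanBroadcastWithin (SimpleGraph.pathGraph n) ⟨0, hn⟩ (n - 1) := by
  refine canBroadcastWithin_of_parent _ (fun i => i.val) (fun i => ⟨i - 1, by omega⟩)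
    (fun i => (Fin.ext_iff (b := ⟨0, hn⟩)).symm) (fun i hi => ⟨?_, ?_⟩)
    (fun i j _ hij _ => Fin.ext hij) (fun i => by omega)
  · rw [SimpleGraph.pathGraph_adj]
    dsimp only
    omega
  · show i.val - 1 < i.val
    omega

theorem broadcastTime_pathGraph {n : ℕ} (hn : 1 ≤ n) :
    broadcastTime (SimpleGraph.pathGraph n) ⟨0, hn⟩ = n - 1 := by
  refine le_antisymm (broadcastTime_le _ (canBroadcastWithin_pathGraph hn)) ?_
  refine le_broadcastTime _ ⟨_, canBroadcastWithin_pathGraph hn⟩ (fun i => i.val)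
    (fun u v huv => ?_) rfl ⟨n - 1, by omega⟩
  rw [SimpleGraph.pathGraph_adj] at huv
  omega

end Path

section Blocks

/-- Start of block `k` when the path is cut into blocks of lengths `R, R - 1, …, 1`. -/
def blockStart (R k : ℕ) : ℕ := ∑ j ∈ range k, (R - j)

def blockIndex (R i : ℕ) : ℕ := Nat.findGreatest (fun k => blockStart R k ≤ i) R

def blockOffset (R i : ℕ) : ℕ := i - blockStart R (blockIndex R i)

def blockTime (R i : ℕ) : ℕ := blockIndex R i + 1 + blockOffset R i

variable {R i : ℕ}

theorem blockStart_succ (R k : ℕ) : blockStart R (k + 1) = blockStart R k + (R - k) :=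
  sum_range_succ _ _

theorem two_mul_blockStart_self (R : ℕ) : 2 * blockStart R R = R * (R + 1) := by
  have hreflect : blockStart R R = ∑ j ∈ range R, (j + 1) := by
    rw [blockStart, ← sum_range_reflect]
    refine sum_congr rfl fun j hj => ?_
    have := mem_range.1 hj
    omega
  have gauss := sum_range_id_mul_two R
  rw [hreflect, sum_add_distrib, sum_const, card_range, smul_eq_mul, mul_one]
  cases R with
  | zero => rfl
  | succ R =>
    rw [Nat.add_sub_cancel] at gauss
    linarith

theorem blockStart_blockIndex_le (R i : ℕ) : blockStart R (blockIndex R i) ≤ i :=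
  Nat.findGreatest_spec (P := fun k => blockStart R k ≤ i) (Nat.zero_le R) (by simp [blockStart])

theorem blockIndex_lt (hi : i < blockStart R R) : blockIndex R i < R := by
  refine (Nat.findGreatest_le R).lt_of_ne fun h : blockIndex R i = R => ?_
  have := blockStart_blockIndex_le R i
  rw [h] at this
  omega

theorem lt_blockStart_blockIndex_succ (hi : i < blockStart R R) :
    i < blockStart R (blockIndex R i + 1) :=
  not_le.1 <| Nat.findGreatest_is_greatest (P := fun k => blockStart R k ≤ i)
    (Nat.lt_succ_self _) (blockIndex_lt hi)

theorem blockIndex_pred (h : blockOffset R i ≠ 0) : blockIndex R (i - 1) = blockIndex R i := by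
  have hle := blockStart_blockIndex_le R i
  refine Nat.findGreatest_eq_iff.2
    ⟨Nat.findGreatest_le R, fun _ => by unfold blockOffset at h; omega, fun k hk hkR hki => ?_⟩
  exact Nat.findGreatest_is_greatest hk hkR (hki.trans (Nat.sub_le i 1))

theorem blockTime_le (hi : i < blockStart R R) : blockTime R i ≤ R := by
  have hlt := lt_blockStart_blockIndex_succ hi
  have := blockIndex_lt hi
  rw [blockStart_succ] at hlt
  unfold blockTime blockOffset
  omega

theorem blockTime_pred (h : blockOffset R i ≠ 0) : blockTime R (i - 1) + 1 = blockTime R i := by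
  have := blockStart_blockIndex_le R i
  unfold blockTime blockOffset at *
  rw [blockIndex_pred h]
  omega

theorem eq_blockStart_of_blockOffset_eq_zero (h : blockOffset R i = 0) :
    i = blockStart R (blockTime R i - 1) := by
  have := blockStart_blockIndex_le R i
  unfold blockTime
  rw [h, Nat.add_zero, Nat.add_sub_cancel]
  unfold blockOffset at h
  omega

end Blocks

section Fan

variable {n : ℕ}

theorem fanGraph_adj_none_some (i : Fin n) : (fanGraph n).Adj none (some i) :=
  (SimpleGraph.fromRel_adj _ _ _).2 ⟨by simp, Or.inl (Or.inr ⟨rfl, i, rfl⟩)⟩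

theorem fanGraph_adj_some_some {i j : Fin n} (h : (i : ℕ) + 1 = j) :
    (fanGraph n).Adj (some i) (some j) :=
  (SimpleGraph.fromRel_adj _ _ _).2
    ⟨fun hij => by simp only [Option.some.injEq, Fin.ext_iff] at hij; omega, Or.inl (Or.inl ⟨i, j, rfl, rfl, h⟩)⟩

def fanTime (R : ℕ) : Option (Fin n) → ℕ
  | none => 0
  | some i => blockTime R i

def fanParent (R : ℕ) : Option (Fin n) → Option (Fin n)
  | none => none
  | some i => if blockOffset R i = 0 then none else some ⟨i - 1, by omega⟩

theorem pos_of_blockOffset_ne_zero {R i : ℕ} (h : blockOffset R i ≠ 0) : 0 < i := by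
  unfold blockOffset at h
  omega

theorem fanParent_adj (R : ℕ) (i : Fin n) :
    (fanGraph n).Adj (fanParent R (some i)) (some i) ∧
      fanTime R (fanParent R (some i)) < fanTime R (some i) := by
  by_cases h : blockOffset R i = 0
  · simp only [fanParent, fanTime, if_pos h]
    exact ⟨fanGraph_adj_none_some i, by unfold blockTime; omega⟩
  · have := blockTime_pred h
    have := pos_of_blockOffset_ne_zero h
    simp only [fanParent, fanTime, if_neg h]
    exact ⟨fanGraph_adj_some_some (by dsimp only; omega), by omega⟩

theorem fanParent_injective (R : ℕ) {i j : Fin n}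
    (htime : blockTime R i = blockTime R j) (hpar : fanParent R (some i) = fanParent R (some j)) :
    i = j := by
  by_cases hi : blockOffset R i = 0 <;> by_cases hj : blockOffset R j = 0 <;>
    simp only [fanParent, hi, hj, if_true, if_false, reduceCtorEq, Option.some.injEq,
      Fin.ext_iff] at hpar
  · ext
    rw [eq_blockStart_of_blockOffset_eq_zero hi, eq_blockStart_of_blockOffset_eq_zero hj, htime]
  · have := pos_of_blockOffset_ne_zero hi
    have := pos_of_blockOffset_ne_zero hj
    ext
    omega

theorem broadcastTime_fanGraph_le {R : ℕ} (hR : n ≤ blockStart R R) :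
    broadcastTime (fanGraph n) none ≤ R := by
  refine broadcastTime_le _ (canBroadcastWithin_of_parent _ (fanTime R) (fanParent R)
    ?_ ?_ ?_ ?_)
  · rintro (_ | i)
    · simp [fanTime]
    · simp [fanTime, blockTime]
  · rintro (_ | i) h
    · exact absurd rfl h
    · exact fanParent_adj R i
  · rintro (_ | i) (_ | j) h htime hpar
    · rfl
    · exact absurd rfl h
    · exact absurd htime (by simp [fanTime, blockTime])
    · exact congrArg some (fanParent_injective R htime hpar)
  · rintro (_ | i)
    · exact Nat.zero_le R
    · exact blockTime_le (i.isLt.trans_le hR)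

end Fan

theorem broadcastTime_fanGraph_le_sqrt (n : ℕ) :
    (broadcastTime (fanGraph n) none : ℝ) ≤ √(2 * n) + 1 := by
  set R := Nat.sqrt (2 * n) + 1
  have hR : n ≤ blockStart R R := by
    have h2n : 2 * n < R ^ 2 := Nat.lt_succ_sqrt' (2 * n)
    have := two_mul_blockStart_self R
    nlinarith
  calc (broadcastTime (fanGraph n) none : ℝ) ≤ R := by exact_mod_cast broadcastTime_fanGraph_le hR
    _ ≤ √(2 * n) + 1 := by
      have : (Nat.sqrt (2 * n) : ℝ) ≤ √(2 * n) := by exact_mod_cast Real.nat_sqrt_le_real_sqrt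
      push_cast [R]
      linarith

theorem sqrt_two_mul_le (x : ℝ) : √(2 * x) ≤ 1.5 * √x := by
  rw [Real.sqrt_mul zero_le_two]
  gcongr
  rw [Real.sqrt_le_left (by norm_num)]
  norm_num

/-- For the fan graph, `Br(G, v) ≤ 1.5√n + 2` from the center `v`, while the
broadcast time of the path obtained by deleting `v`, from an endpoint, equals
`n − 1`; hence `Br(G ∖ {v}, s) = Ω(Br(G, v)²)`. -/
theorem fan_graph_broadcast :
    (∀ n : ℕ, ∀ hn : 1 ≤ n,
      (broadcastTime (fanGraph n) none : ℝ) ≤ 1.5 * Real.sqrt n + 2 ∧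
      broadcastTime (SimpleGraph.pathGraph n) ⟨0, by omega⟩ = n - 1) ∧
    ∃ c : ℝ, 0 < c ∧ ∃ N : ℕ, ∀ n : ℕ, ∀ hn : N ≤ n, ∀ hn1 : 1 ≤ n,
      c * (broadcastTime (fanGraph n) none : ℝ) ^ 2 ≤
        (broadcastTime (SimpleGraph.pathGraph n) ⟨0, by omega⟩ : ℝ) := by
  have hfan (n : ℕ) : (broadcastTime (fanGraph n) none : ℝ) ≤ 1.5 * √n + 2 := by
    linarith [broadcastTime_fanGraph_le_sqrt n, sqrt_two_mul_le n]
  refine ⟨fun n hn => ⟨hfan n, broadcastTime_pathGraph hn⟩, 1 / 25, by norm_num, 2,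
    fun n hn hn1 => ?_⟩
  rw [broadcastTime_pathGraph hn1, Nat.cast_sub hn1, Nat.cast_one]
  have hn2 : (2 : ℝ) ≤ n := by exact_mod_cast hn
  have hsqrt : 1 ≤ √(n : ℝ) := Real.one_le_sqrt.2 (by linarith)
  have hB : (broadcastTime (fanGraph n) none : ℝ) ≤ 3.5 * √n := by linarith [hfan n]
  have hB2 : (broadcastTime (fanGraph n) none : ℝ) ^ 2 ≤ 12.25 * n := by
    calc _ ≤ (3.5 * √(n : ℝ)) ^ 2 := pow_le_pow_left₀ (Nat.cast_nonneg _) hB 2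
      _ = 12.25 * n := by rw [mul_pow, Real.sq_sqrt (Nat.cast_nonneg n)]; norm_num
  linarith
end

section
/- Let G be a connected graph, s a source vertex, and v any vertex of G. If G ∖ {v} has connected components C₁, …, C_p with arbitrarily chosen sources s_i ∈ C_i, then Σ_i Br(C_i, s_i) ≤ Br(G, s) · (2·Br(G, s) + 1). -/
open SimpleGraph

section

variable {V W : Type*} {G : SimpleGraph V} {H : SimpleGraph W}

theorem isSchedule_const (G : SimpleGraph V) (A : Set V) : IsSchedule G fun _ => A :=
  fun _ => ⟨subset_rfl, id, by simp, by simp⟩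

theorem IsSchedule.monotone {S : ℕ → Set V} (hS : IsSchedule G S) : Monotone S :=
  monotone_nat_of_le_succ fun t => (hS t).1

theorem IsSchedule.truncate {S : ℕ → Set V} (hS : IsSchedule G S) (R : ℕ) :
    IsSchedule G fun t => S (min t R) := by
  intro t
  rcases lt_or_ge t R with ht | ht
  · simpa only [min_eq_left ht.le, min_eq_left (Nat.succ_le_of_lt ht)] using hS t
  · simpa only [min_eq_right ht, min_eq_right (Nat.le_succ_of_le ht)] using
      isSchedule_const G (S R) t

theorem IsSchedule.comap [Finite V] (f : H ↪g G) {S : ℕ → Set V} (hS : IsSchedule G S)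
    (hrange : ∀ t, S t ⊆ Set.range f) : IsSchedule H fun t => f ⁻¹' S t := by
  classical
  intro t
  obtain ⟨hmono, caller, hcaller, hcard⟩ := hS t
  have hnew {w : W} (hw : w ∈ f ⁻¹' S (t + 1) \ f ⁻¹' S t) : f w ∈ S (t + 1) \ S t := hw
  let caller' (w : W) : W := if h : caller (f w) ∈ Set.range f then h.choose else w
  have hcaller' {w : W} (hw : w ∈ f ⁻¹' S (t + 1) \ f ⁻¹' S t) :
      f (caller' w) = caller (f w) := by
    have h := hrange t (hcaller _ (hnew hw)).1
    simpa only [caller', dif_pos h] using h.choose_spec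
  refine ⟨Set.preimage_mono hmono, caller', fun w hw => ?_, fun u => ?_⟩
  · rw [Set.mem_preimage, hcaller' hw, ← f.map_adj_iff, hcaller' hw]
    exact hcaller _ (hnew hw)
  · refine le_trans (Set.ncard_le_ncard_of_injOn f ?_ f.injective.injOn) (hcard (f u))
    rintro w ⟨hw, rfl⟩
    exact ⟨hnew hw, (hcaller' hw).symm⟩

def Informs (G : SimpleGraph V) (A B : Set V) (R : ℕ) : Prop :=
  ∃ S : ℕ → Set V, S 0 = A ∧ IsSchedule G S ∧ S R = B

theorem broadcastTime_le_of_informs {x : V} {R : ℕ} (h : Informs G {x} Set.univ R) :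
    broadcastTime G x ≤ R :=
  Nat.sInf_le h

namespace Informs

theorem self (A : Set V) (R : ℕ) : Informs G A A R :=
  ⟨fun _ => A, rfl, isSchedule_const G A, rfl⟩

theorem trans {A B C : Set V} {R₁ R₂ : ℕ} (h₁ : Informs G A B R₁)
    (h₂ : Informs G B C R₂) : Informs G A C (R₁ + R₂) := by
  obtain ⟨S, rfl, hS, rfl⟩ := h₁
  obtain ⟨S', hS'0, hS', rfl⟩ := h₂
  let U (t : ℕ) : Set V := if t ≤ R₁ then S t else S' (t - R₁)
  have hU {t : ℕ} (ht : R₁ ≤ t) : U t = S' (t - R₁) := by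
    rcases ht.eq_or_lt with rfl | ht
    · simp [U, hS'0]
    · simp [U, ht.not_ge]
  refine ⟨U, by simp [U], fun t => ?_, by rw [hU (by omega), Nat.add_sub_cancel_left]⟩
  rcases lt_or_ge t R₁ with ht | ht
  · simpa only [U, if_pos ht.le, if_pos (Nat.succ_le_of_lt ht)] using hS t
  · simpa only [hU ht, hU (t := t + 1) (by omega), Nat.sub_add_comm ht] using hS' (t - R₁)

theorem mono_rounds {A B : Set V} {R R' : ℕ} (h : Informs G A B R) (hR : R ≤ R') :
    Informs G A B R' := by
  obtain ⟨k, rfl⟩ := Nat.exists_eq_add_of_le hR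
  exact h.trans (self B k)

theorem union_right [Finite V] {A B : Set V} {R : ℕ} (h : Informs G A B R) (D : Set V) :
    Informs G (A ∪ D) (B ∪ D) R := by
  obtain ⟨S, rfl, hS, rfl⟩ := h
  refine ⟨fun t => S t ∪ D, rfl, fun t => ?_, rfl⟩
  obtain ⟨hmono, caller, hcaller, hcard⟩ := hS t
  have hnew : (S (t + 1) ∪ D) \ (S t ∪ D) ⊆ S (t + 1) \ S t := by
    rintro w ⟨hw | hw, hw'⟩ <;> simp_all
  refine ⟨Set.union_subset_union_left D hmono, caller, fun w hw => ?_, fun u => ?_⟩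
  · exact ⟨Or.inl (hcaller w (hnew hw)).1, (hcaller w (hnew hw)).2⟩
  · refine le_trans (Set.ncard_le_ncard ?_) (hcard u)
    exact fun w hw => ⟨hnew hw.1, hw.2⟩

theorem comap [Finite V] (f : H ↪g G) {A B : Set V} {R : ℕ} (h : Informs G A B R)
    (hB : B ⊆ Set.range f) : Informs H (f ⁻¹' A) (f ⁻¹' B) R := by
  obtain ⟨S, rfl, hS, rfl⟩ := h
  refine ⟨fun t => f ⁻¹' S (min t R), by simp, (hS.truncate R).comap f fun t => ?_, by simp⟩
  exact (hS.monotone (min_le_right t R)).trans hB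

end Informs

theorem informs_insert_of_adj [Finite V] {A : Set V} {a b : V} (ha : a ∈ A) (hab : G.Adj a b) :
    Informs G A (insert b A) 1 := by
  refine ⟨fun t => if t = 0 then A else insert b A, rfl, fun t => ?_, rfl⟩
  rcases Nat.eq_zero_or_pos t with rfl | ht
  · have hnew : insert b A \ A ⊆ {b} := fun w ⟨hw, hwA⟩ => hw.resolve_right hwA
    simp only [if_true, Nat.zero_add, one_ne_zero, if_false]
    refine ⟨Set.subset_insert b A, fun _ => a, fun w hw => ⟨ha, hnew hw ▸ hab⟩,
      fun u => ?_⟩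
    exact (Set.ncard_le_ncard fun w hw => hnew hw.1).trans (Set.ncard_singleton b).le
  · simpa only [ht.ne', if_false, Nat.succ_ne_zero] using isSchedule_const G (insert b A) t

section Blocks

variable [Finite W] (hH : H.Preconnected) {ι : Type*} (β : W → ι) {K : ℕ}
  (hβ : ∀ z, Informs H {z} {x | β x = β z} K)
include hH hβ

/-- The missing blocks are absorbed one at a time, each across an edge leaving the informed
part. -/
theorem informs_univ_of_preimage_blocks {F : Set ι} (hF : (β ⁻¹' F).Nonempty) :
    Informs H (β ⁻¹' F) Set.univ ((K + 1) * (Set.range β \ F).ncard) := by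
  induction hn : (Set.range β \ F).ncard generalizing F with
  | zero =>
    have hcover : β ⁻¹' F = Set.univ := by
      rw [Set.ncard_eq_zero, Set.sdiff_eq_empty, Set.range_subset_iff] at hn
      exact Set.eq_univ_of_forall hn
    exact hcover ▸ Informs.self _ _
  | succ n ih =>
    obtain ⟨a, ha⟩ := hF
    obtain ⟨_, ⟨y, rfl⟩, hy⟩ :=
      Set.nonempty_of_ncard_ne_zero (by omega : (Set.range β \ F).ncard ≠ 0)
    obtain ⟨d, -, hd, hd'⟩ := (hH a y).some.exists_boundary_dart _ ha hy
    have hblock :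
        {x | β x = β d.snd} ∪ insert d.snd (β ⁻¹' F) = β ⁻¹' insert (β d.snd) F := by
      ext x
      simp only [Set.mem_union, Set.mem_insert_iff, Set.mem_preimage, Set.mem_ofPred_eq]
      constructor
      · rintro (h | rfl | h) <;> simp_all
      · rintro (h | h) <;> simp_all
    have hstep := (informs_insert_of_adj hd d.adj).trans
      (by simpa [hblock] using (hβ d.snd).union_right (insert d.snd (β ⁻¹' F)))
    have hnew : β d.snd ∈ Set.range β \ F := ⟨⟨d.snd, rfl⟩, hd'⟩
    have hrest := ih (F := insert (β d.snd) F) ⟨a, Or.inr ha⟩ (by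
      rw [Set.insert_eq, Set.union_comm, ← Set.sdiff_sdiff,
        Set.ncard_sdiff_singleton_of_mem hnew, hn]
      rfl)
    exact (hstep.trans hrest).mono_rounds (by ring_nf; omega)

theorem informs_univ_of_blocks (σ : W) :
    Informs H {σ} Set.univ ((K + 1) * (Set.range β).ncard) := by
  have hfirst : Informs H {σ} (β ⁻¹' {β σ}) K := hβ σ
  refine (hfirst.trans (informs_univ_of_preimage_blocks hH β hβ ⟨σ, rfl⟩)).mono_rounds ?_
  obtain ⟨m, hm⟩ := Nat.exists_eq_add_one_of_ne_zero
    (Set.nonempty_of_mem (Set.mem_range_self (f := β) σ)).ncard_pos.ne'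
  rw [Set.ncard_sdiff_singleton_of_mem (Set.mem_range_self σ), hm, Nat.add_sub_cancel]
  nlinarith

end Blocks

theorem informs_broadcastTime [Finite V] (hG : G.Connected) (s : V) :
    Informs G {s} Set.univ (broadcastTime G s) :=
  Nat.sInf_mem (s := {R | Informs G {s} Set.univ R}) ⟨_,
    informs_univ_of_blocks hG.preconnected id (fun z => by simpa using Informs.self {z} 0) s⟩

/-- The spanning tree of a broadcast scheme from `s` finishing by round `B`: `time w` is the
round in which `w` is informed and `parent w` the vertex that calls it. -/
structure BroadcastTree (G : SimpleGraph V) (s : V) (B : ℕ) where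
  time : V → ℕ
  parent : V → V
  time_le : ∀ w, time w ≤ B
  adj_parent : ∀ w, w ≠ s → G.Adj (parent w) w
  time_parent_lt : ∀ w, w ≠ s → time (parent w) < time w
  injOn_parent : ∀ t, Set.InjOn parent {w | w ≠ s ∧ time w = t}

theorem Informs.nonempty_broadcastTree [Finite V] {s : V} {B : ℕ}
    (h : Informs G {s} Set.univ B) : Nonempty (BroadcastTree G s B) := by
  obtain ⟨S, hS0, hS, hSB⟩ := h
  choose caller hcaller hcard using fun t => (hS t).2
  have mem_B (w : V) : w ∈ S B := hSB ▸ Set.mem_univ w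
  let time (w : V) : ℕ := sInf {t | w ∈ S t}
  have mem_time (w : V) : w ∈ S (time w) := Nat.sInf_mem (s := {t | w ∈ S t}) ⟨B, mem_B w⟩
  have time_le_of_mem {w : V} {t : ℕ} (h : w ∈ S t) : time w ≤ t := Nat.sInf_le h
  have time_pos {w : V} (hw : w ≠ s) : 0 < time w :=
    Nat.pos_of_ne_zero fun h0 => hw (by simpa [h0, hS0] using mem_time w)
  have hcalled {w : V} (hw : w ≠ s) : w ∈ S (time w - 1 + 1) \ S (time w - 1) := by
    rw [Nat.sub_add_cancel (time_pos hw)]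
    exact ⟨mem_time w, fun h => by have := time_le_of_mem h; have := time_pos hw; omega⟩
  refine ⟨⟨time, fun w => caller (time w - 1) w, fun w => time_le_of_mem (mem_B w),
    fun w hw => (hcaller _ w (hcalled hw)).2, fun w hw => ?_,
    fun t w₁ hw₁ w₂ hw₂ heq => ?_⟩⟩
  · have := time_le_of_mem (hcaller _ w (hcalled hw)).1
    have := time_pos hw
    omega
  · obtain ⟨hw₁, rfl⟩ := hw₁
    obtain ⟨hw₂, ht⟩ := hw₂
    have hcalled₂ := hcalled hw₂
    rw [ht] at hcalled₂
    exact (Set.ncard_le_one).mp (hcard _ _) w₁ ⟨hcalled hw₁, rfl⟩ w₂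
      ⟨hcalled₂, by simpa [ht] using heq.symm⟩

namespace BroadcastTree

variable {s : V} {B : ℕ} (T : BroadcastTree G s B) (v : V)

def IsRoot (w : V) : Prop :=
  w = s ∨ T.parent w = v

/-- Deleting `v` cuts the broadcast tree into subtrees; `T.root v w` is the root of the one
containing `w`. -/
noncomputable def root (T : BroadcastTree G s B) (v w : V) : V :=
  open Classical in
  if T.IsRoot v w then w else root T v (T.parent w)
termination_by T.time w
decreasing_by exact T.time_parent_lt w fun hs => by simp_all [IsRoot]

variable {T v}

theorem root_of_isRoot {w : V} (h : T.IsRoot v w) : T.root v w = w := by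
  rw [root, if_pos h]

theorem root_parent {w : V} (h : ¬T.IsRoot v w) :
    T.root v w = T.root v (T.parent w) := by
  rw [root, if_neg h]

variable (T v) in
theorem isRoot_root (w : V) : T.IsRoot v (T.root v w) := by
  fun_induction T.root v w with
  | case1 w h => exact h
  | case2 w _ ih => exact ih

theorem root_ne {w : V} (hw : w ≠ v) : T.root v w ≠ v := by
  fun_induction T.root v w with
  | case1 w _ => exact hw
  | case2 w h ih => exact ih (not_or.mp h).2

theorem time_root_le (w : V) : T.time (T.root v w) ≤ T.time w := by
  fun_induction T.root v w with
  | case1 w _ => rfl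
  | case2 w h ih => exact ih.trans (T.time_parent_lt w (not_or.mp h).1).le

theorem connectedComponentMk_eq_of_eq_root {r w : V} (hr : r ≠ v) (hw : w ≠ v)
    (h : r = T.root v w) :
    (G.induce {u | u ≠ v}).connectedComponentMk ⟨r, hr⟩ =
      (G.induce {u | u ≠ v}).connectedComponentMk ⟨w, hw⟩ := by
  fun_induction T.root v w with
  | case1 w _ => subst h; rfl
  | case2 w h' ih =>
    obtain ⟨hs, hv⟩ := not_or.mp h'
    rw [ih hv h]
    exact ConnectedComponent.connectedComponentMk_eq_of_adj (T.adj_parent w hs)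

theorem connectedComponentMk_eq_of_root_eq {x y : V} (hx : x ≠ v) (hy : y ≠ v)
    (h : T.root v x = T.root v y) :
    (G.induce {u | u ≠ v}).connectedComponentMk ⟨x, hx⟩ =
      (G.induce {u | u ≠ v}).connectedComponentMk ⟨y, hy⟩ :=
  (connectedComponentMk_eq_of_eq_root (root_ne hx) hx rfl).symm.trans
    (connectedComponentMk_eq_of_eq_root (root_ne hx) hy h)

variable (T v) in
def subtree (w : V) : Set V :=
  {x | x ≠ v ∧ T.root v x = T.root v w}

variable (T) in
/-- The subtree roots other than `s` are called by `v` in distinct rounds after `T.time v`, and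
`s` is a root only when `v ≠ s`, in which case `T.time v ≥ 1`; so all roots get distinct labels
in `[1, B]`. -/
theorem ncard_image_root_le : (T.root v '' {v}ᶜ).ncard ≤ B := by
  classical
  have hroot {e : V} (he : e ∈ T.root v '' {v}ᶜ) :
      e ≠ v ∧ (e ≠ s → T.parent e = v ∧ T.time v < T.time e) := by
    obtain ⟨w, hw, rfl⟩ := he
    refine ⟨root_ne hw, fun hs => ?_⟩
    have hv := (T.isRoot_root v w).resolve_left hs
    have := T.time_parent_lt _ hs
    rw [hv] at this
    exact ⟨hv, this⟩
  let label (e : V) : ℕ := if e = s then T.time v else T.time e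
  calc (T.root v '' {v}ᶜ).ncard ≤ (Set.Icc 1 B).ncard := by
        refine Set.ncard_le_ncard_of_injOn label (fun e he => ?_)
          (fun e₁ he₁ e₂ he₂ h => ?_)
        · obtain ⟨hev, hes⟩ := hroot he
          by_cases h : e = s
          · subst h
            have := T.time_parent_lt v hev.symm
            simp only [label, if_pos]
            exact ⟨by omega, T.time_le v⟩
          · have := (hes h).2
            simp only [label, if_neg h]
            exact ⟨by omega, T.time_le e⟩
        · have h₁ := (hroot he₁).2
          have h₂ := (hroot he₂).2
          by_cases hs₁ : e₁ = s <;> by_cases hs₂ : e₂ = s <;>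
            simp only [label, hs₁, hs₂, if_true, if_false] at h
          · exact hs₁.trans hs₂.symm
          · exact absurd h (h₂ hs₂).2.ne
          · exact absurd h.symm (h₁ hs₁).2.ne
          · exact T.injOn_parent _ ⟨hs₁, rfl⟩ ⟨hs₂, h.symm⟩
              ((h₁ hs₁).1.trans (h₂ hs₂).1.symm)
    _ = B := by simp

variable (T) [Finite V]

/-- Every vertex called after round `t₀` from inside `X` can be called again, in the same
round, by the same parent. -/
theorem informs_replay {D X : Set V} {t₀ : ℕ} (hDX : D ⊆ X)
    (hX : ∀ x ∈ X, x ∉ D → x ≠ s ∧ T.parent x ∈ X ∧ t₀ < T.time x) :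
    Informs G D X (B - t₀) := by
  let S (t : ℕ) : Set V := D ∪ {x ∈ X | T.time x ≤ t₀ + t}
  have hS0 : S 0 = D := by
    refine Set.union_eq_left.mpr fun x ⟨hx, ht⟩ => ?_
    by_contra hxD
    have := (hX x hx hxD).2.2
    omega
  have hSB : S (B - t₀) = X := by
    refine subset_antisymm (Set.union_subset hDX fun x hx => hx.1) fun x hx => Or.inr ⟨hx, ?_⟩
    have := T.time_le x
    omega
  refine ⟨S, hS0, fun t => ?_, hSB⟩
  have hnew {x : V} (hx : x ∈ S (t + 1) \ S t) :
      x ≠ s ∧ T.parent x ∈ X ∧ T.time x = t₀ + t + 1 := by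
    obtain ⟨hxD | ⟨hxX, hxt⟩, hx'⟩ := hx
    · exact absurd (Or.inl hxD) hx'
    · have hxD : x ∉ D := fun h => hx' (Or.inl h)
      have : ¬T.time x ≤ t₀ + t := fun h => hx' (Or.inr ⟨hxX, h⟩)
      exact ⟨(hX x hxX hxD).1, (hX x hxX hxD).2.1, by omega⟩
  refine ⟨Set.union_subset_union_right D fun x hx => ⟨hx.1, by have := hx.2; omega⟩,
    T.parent, fun x hx => ?_, fun u => ?_⟩
  · obtain ⟨hs, hpX, ht⟩ := hnew hx
    exact ⟨Or.inr ⟨hpX, by have := T.time_parent_lt x hs; omega⟩, T.adj_parent x hs⟩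
  · refine (Set.ncard_le_one).mpr fun a ⟨ha, hau⟩ b ⟨hb, hbu⟩ => ?_
    obtain ⟨has, -, hat⟩ := hnew ha
    obtain ⟨hbs, -, hbt⟩ := hnew hb
    exact T.injOn_parent (t₀ + t + 1) ⟨has, hat⟩ ⟨hbs, hbt⟩ (hau.trans hbu.symm)

theorem exists_informs_ancestors {w : V} (hw : w ≠ v) :
    ∃ P ⊆ T.subtree v w, T.root v w ∈ P ∧ Informs G {w} P (T.time w) := by
  induction w using root.induct T v with
  | case1 w h =>
    refine ⟨{w}, fun x hx => ⟨hx ▸ hw, hx ▸ rfl⟩, by rw [root_of_isRoot h]; rfl,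
      Informs.self _ _⟩
  | case2 w h ih =>
    obtain ⟨hs, hv⟩ := not_or.mp h
    obtain ⟨P, hP, hroot, hup⟩ := ih hv
    have hcall : Informs G {w} ({T.parent w} ∪ {w}) 1 := by
      simpa only [Set.insert_eq] using
        informs_insert_of_adj (Set.mem_singleton w) (T.adj_parent w hs).symm
    have hsubtree : T.subtree v w = T.subtree v (T.parent w) := by
      simp only [subtree, root_parent h]
    rw [hsubtree, root_parent h]
    refine ⟨P ∪ {w}, Set.union_subset hP ?_, Or.inl hroot,
      (hcall.trans (hup.union_right {w})).mono_rounds ?_⟩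
    · rintro x rfl
      exact ⟨hw, root_parent h⟩
    · have := T.time_parent_lt w hs
      omega

theorem informs_subtree {w : V} (hw : w ≠ v) :
    Informs G {w} (T.subtree v w) (2 * B) := by
  obtain ⟨P, hP, hroot, hup⟩ := T.exists_informs_ancestors hw
  refine (hup.trans (T.informs_replay (t₀ := T.time (T.root v w)) hP
    fun x ⟨hxv, hx⟩ hxP => ?_)).mono_rounds ?_
  · have hnot : ¬T.IsRoot v x := fun h => hxP (by rwa [← root_of_isRoot h, hx])
    obtain ⟨hs, hpv⟩ := not_or.mp hnot
    have hpar : T.root v (T.parent x) = T.root v w := (root_parent hnot).symm.trans hx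
    refine ⟨hs, ⟨hpv, hpar⟩, ?_⟩
    calc T.time (T.root v w) = T.time (T.root v (T.parent x)) := by rw [hpar]
      _ ≤ T.time (T.parent x) := time_root_le _
      _ < T.time x := T.time_parent_lt x hs
  · have := T.time_le w
    omega

theorem broadcastTime_component_le
    (c : (G.induce {u | u ≠ v}).ConnectedComponent) (σ : c.supp) :
    broadcastTime ((G.induce {u | u ≠ v}).induce c.supp) σ ≤
      (2 * B + 1) * (Set.range fun x : c.supp => T.root v x.1.1).ncard := by
  let f : (G.induce {u | u ≠ v}).induce c.supp ↪g G :=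
    (Embedding.induce c.supp).trans (Embedding.induce _)
  have hf (x : c.supp) : f x = x.1.1 := rfl
  refine broadcastTime_le_of_informs (informs_univ_of_blocks
    c.maximal_connected_induce_supp.prop.preconnected _ (fun z => ?_) σ)
  have hsubtree : T.subtree v z.1.1 ⊆ Set.range f := by
    rintro x ⟨hxv, hx⟩
    exact ⟨⟨⟨x, hxv⟩, (connectedComponentMk_eq_of_root_eq hxv z.1.2 hx).trans z.2⟩, rfl⟩
  convert (T.informs_subtree z.1.2).comap f hsubtree using 1
  · ext x
    simp only [Set.mem_preimage, hf, Set.mem_singleton_iff, Subtype.ext_iff]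
  · ext x
    simp only [Set.mem_preimage, hf, Set.mem_ofPred_eq]
    exact (and_iff_right x.1.2).symm

end BroadcastTree

end

/-- Deleting any vertex `v` from a connected graph `G`: the sum over the connected
components `C` of `G − v` of their broadcast times, from arbitrarily chosen sources,
is at most `Br(G,s)·(2·Br(G,s) + 1)`. -/
theorem sum_component_broadcast_le {V : Type*} [Fintype V] (G : SimpleGraph V)
    (hG : G.Connected) (s v : V)
    (srcs : ∀ c : (G.induce {u | u ≠ v}).ConnectedComponent, ↥c.supp) :
    ∑ᶠ c : (G.induce {u | u ≠ v}).ConnectedComponent,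
        broadcastTime ((G.induce {u | u ≠ v}).induce c.supp) (srcs c)
      ≤ broadcastTime G s * (2 * broadcastTime G s + 1) := by
  obtain ⟨T⟩ := (informs_broadcastTime hG s).nonempty_broadcastTree
  set B := broadcastTime G s
  let roots (c : (G.induce {u | u ≠ v}).ConnectedComponent) : Set V :=
    Set.range fun x : c.supp => T.root v x.1.1
  have hdisj : Pairwise fun c c' => Disjoint (roots c) (roots c') := by
    refine fun c c' hne => Set.disjoint_left.mpr ?_
    rintro _ ⟨x, rfl⟩ ⟨y, hxy⟩
    exact hne <| x.2.symm.trans <|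
      (T.connectedComponentMk_eq_of_root_eq x.1.2 y.1.2 hxy.symm).trans y.2
  have hroots : ⋃ c, roots c ⊆ T.root v '' {v}ᶜ := by
    rintro _ ⟨_, ⟨c, rfl⟩, x, rfl⟩
    exact ⟨x.1.1, x.1.2, rfl⟩
  calc ∑ᶠ c, broadcastTime ((G.induce {u | u ≠ v}).induce c.supp) (srcs c)
      ≤ ∑ᶠ c, (2 * B + 1) * (roots c).ncard :=
        finsum_le_finsum' (Set.toFinite _) (Set.toFinite _)
          fun c => T.broadcastTime_component_le c (srcs c)
    _ = (2 * B + 1) * (⋃ c, roots c).ncard := by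
        rw [Set.ncard_iUnion_of_finite (fun _ => Set.toFinite _) hdisj, mul_finsum]
    _ ≤ (2 * B + 1) * B := by
        gcongr
        exact (Set.ncard_le_ncard hroots).trans T.ncard_image_root_le
    _ = B * (2 * B + 1) := mul_comm _ _
end

section
/- Let w ≥ 1 and f(ℓ, w) = 27^{-w}(w!)^{-2} ℓ^{4^{-w}}. Then for ℓ ≥ 1, √(f(√ℓ, w−1)/3) ≥ 3w · f(ℓ, w), i.e., sqrt(27^{-(w-1)} ℓ^{4^{-(w-1)}/2} ((w−1)!)^{-2} / 3) ≥ 3·27^{-w} ℓ^{4^{-w}} (w!)^{-2} · w. -/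
/-!
Put `e = 4^{-w}`. Since `(√ℓ)^{4^{-(w-1)}} = ℓ^{2e}`, `27^{-(w-1)} = 27 · 27^{-w}` and
`(w-1)! = w!/w`, one has `f(√ℓ, w-1)/3 = (3w)² · f(ℓ, w) · ℓ^e`. So the claim reduces to
`f(ℓ, w) ≤ ℓ^e`, which holds because the coefficient `27^{-w} (w!)^{-2}` is at most `1`.
-/

/-- The lower-bound function `f(ℓ, w) = 27^{-w} (w!)^{-2} ℓ^{4^{-w}}`. -/
noncomputable def fLB (ℓ : ℝ) (w : ℕ) : ℝ :=
  (27 : ℝ) ^ (-(w : ℝ)) * ((Nat.factorial w : ℝ)) ^ (-(2 : ℝ)) * ℓ ^ ((4 : ℝ) ^ (-(w : ℝ)))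

section

variable {ℓ : ℝ}

lemma fLB_nonneg (hℓ : 0 ≤ ℓ) (w : ℕ) : 0 ≤ fLB ℓ w := by
  unfold fLB
  positivity

lemma fLB_le_rpow (hℓ : 0 ≤ ℓ) (w : ℕ) : fLB ℓ w ≤ ℓ ^ (4 : ℝ) ^ (-(w : ℝ)) := by
  have h27 : (27 : ℝ) ^ (-(w : ℝ)) ≤ 1 :=
    Real.rpow_le_one_of_one_le_of_nonpos (by norm_num) (by simp)
  have hfact : (w.factorial : ℝ) ^ (-(2 : ℝ)) ≤ 1 :=
    Real.rpow_le_one_of_one_le_of_nonpos (mod_cast w.factorial_pos) (by norm_num)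
  unfold fLB
  calc _ ≤ 1 * 1 * ℓ ^ (4 : ℝ) ^ (-(w : ℝ)) := by gcongr
    _ = _ := by ring

lemma sqrt_rpow_four_pow_neg (hℓ : 0 ≤ ℓ) (n : ℕ) :
    √ℓ ^ (4 : ℝ) ^ (-(n : ℝ)) = (ℓ ^ (4 : ℝ) ^ (-((n + 1 : ℕ) : ℝ))) ^ 2 := by
  rw [Real.sqrt_eq_rpow, ← Real.rpow_mul hℓ, ← Real.rpow_mul_natCast hℓ]
  congr 1
  push_cast
  rw [neg_add, Real.rpow_add (by norm_num), Real.rpow_neg_one]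
  ring

lemma fLB_sqrt (hℓ : 0 ≤ ℓ) (n : ℕ) :
    fLB √ℓ n = 27 * (n + 1) ^ 2 * fLB ℓ (n + 1) * ℓ ^ (4 : ℝ) ^ (-((n + 1 : ℕ) : ℝ)) := by
  have h27 : (27 : ℝ) ^ (-((n + 1 : ℕ) : ℝ)) = 27 ^ (-(n : ℝ)) / 27 := by
    rw [Nat.cast_succ, neg_add, Real.rpow_add (by norm_num), Real.rpow_neg_one, div_eq_mul_inv]
  have hfact : ((n + 1).factorial : ℝ) ^ (-(2 : ℝ)) =
      (n.factorial : ℝ) ^ (-(2 : ℝ)) / (n + 1) ^ 2 := by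
    rw [Nat.factorial_succ, Nat.cast_mul, Real.mul_rpow (by positivity) (by positivity),
      Real.rpow_neg (by positivity), Real.rpow_two]
    push_cast
    ring
  unfold fLB
  rw [sqrt_rpow_four_pow_neg hℓ, h27, hfact]
  field_simp

end

/-- The key recursive inequality of the pathwidth induction: for `w ≥ 1` and `ℓ ≥ 1`,
`√(f(√ℓ, w−1)/3) ≥ 3w · f(ℓ, w)`. -/
theorem fLB_recursive_inequality (w : ℕ) (hw : 1 ≤ w) (ℓ : ℝ) (hℓ : 1 ≤ ℓ) :
    3 * (w : ℝ) * fLB ℓ w ≤ Real.sqrt (fLB (Real.sqrt ℓ) (w - 1) / 3) := by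
  obtain ⟨n, rfl⟩ := Nat.exists_eq_add_of_le' hw
  have hℓ₀ : 0 ≤ ℓ := by linarith
  set f := fLB ℓ (n + 1)
  set L := ℓ ^ (4 : ℝ) ^ (-((n + 1 : ℕ) : ℝ))
  have hf_le_sqrt : f ≤ √(f * L) := by
    apply Real.le_sqrt_of_sq_le
    rw [sq]
    exact mul_le_mul_of_nonneg_left (fLB_le_rpow hℓ₀ _) (fLB_nonneg hℓ₀ _)
  calc 3 * ((n + 1 : ℕ) : ℝ) * f ≤ 3 * (n + 1) * √(f * L) := by
        push_cast
        gcongr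
    _ = √((3 * (n + 1)) ^ 2 * (f * L)) := by
        rw [Real.sqrt_mul (sq_nonneg _), Real.sqrt_sq (by positivity)]
    _ = √(fLB √ℓ (n + 1 - 1) / 3) := by
        rw [Nat.add_sub_cancel, fLB_sqrt hℓ₀]
        congr 1
        ring
end
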